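/- arXiv:2107.12559 — 3 statements merged into one kernel-verified Lean document; each statement's English description precedes it below -/
import Mathlib

section
/- For complex s with Re(s) > 0, real w > 0, and complex b with Re(b) > 0 and Re(b-s) > 0, the integral ∫₀^∞ v^{s-1} · ζ(b+1, v+w+1/2) dv equals Γ(s) · Γ(b+1-s) · ζ(b+1-s, w+1/2) / Γ(b+1), where ζ(s,a) is the Hurwitz zeta function. -/
/-!
Expanding `ζ(b + 1, v + a)` as a series, the `k`-th term contributes the Mellin transform of
`(v + c)^(-r)` with `c = k + a`, `r = b + 1`. Scaling `v ↦ c v` reduces this to `c = 1`, and the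
substitution `x = v / (1 + v)` turns `∫₀^∞ v^(s-1) (1 + v)^(-r) dv` into Euler's integral
`B(s, r - s) = Γ(s) Γ(r - s) / Γ(r)`. The same computation with `Re s`, `Re r` in place of
`s`, `r` bounds the absolute integrals by `C (k + a)^(Re (s - r))`, which is summable because
`Re (r - s) > 1`; so summation and integration may be interchanged, and summing
`(k + a)^(s - r)` over `k` gives `ζ(r - s, a)`.
-/

open Complex MeasureTheory Set Filter

/-- The Hurwitz zeta function as a series `ζ(s,a) = Σ_{k=0}^∞ 1/(k+a)^s`
(valid representation in the stated parameter range). -/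
noncomputable def hurwitzZetaSeries (s : ℂ) (a : ℂ) : ℂ :=
  ∑' k : ℕ, 1 / ((k : ℂ) + a) ^ s

section DivOneAdd

variable {E : Type*} [NormedAddCommGroup E] [NormedSpace ℝ E]

lemma hasDerivAt_div_one_add {v : ℝ} (hv : 1 + v ≠ 0) :
    HasDerivAt (fun v : ℝ => v / (1 + v)) ((1 + v) ^ 2)⁻¹ v := by
  refine ((hasDerivAt_id' v).div ((hasDerivAt_id' v).const_add 1) hv).congr_deriv ?_
  ring

lemma strictMonoOn_div_one_add : StrictMonoOn (fun v : ℝ => v / (1 + v)) (Ioi 0) := by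
  intro x hx y hy hxy
  simp only [mem_Ioi] at hx hy
  rw [div_lt_div_iff₀ (by linarith) (by linarith)]
  linarith

lemma image_div_one_add_Ioi : (fun v : ℝ => v / (1 + v)) '' Ioi 0 = Ioo 0 1 := by
  ext x
  constructor
  · rintro ⟨v, hv, rfl⟩
    simp only [mem_Ioi] at hv
    exact ⟨by positivity, (div_lt_one (by linarith)).2 (by linarith)⟩
  · rintro ⟨hx0, hx1⟩
    refine ⟨x / (1 - x), div_pos hx0 (by linarith), ?_⟩
    have : 1 - x ≠ 0 := by linarith
    field_simp
    ring

lemma hasDerivWithinAt_div_one_add_Ioi :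
    ∀ v ∈ Ioi (0 : ℝ),
      HasDerivWithinAt (fun v : ℝ => v / (1 + v)) ((1 + v) ^ 2)⁻¹ (Ioi 0) v :=
  fun v hv => (hasDerivAt_div_one_add (by linarith [mem_Ioi.1 hv])).hasDerivWithinAt

lemma integral_Ioo_zero_one_eq_integral_Ioi (g : ℝ → E) :
    ∫ x in Ioo 0 1, g x = ∫ v in Ioi 0, ((1 + v) ^ 2)⁻¹ • g (v / (1 + v)) := by
  rw [← image_div_one_add_Ioi, integral_image_eq_integral_abs_deriv_smul measurableSet_Ioi
    hasDerivWithinAt_div_one_add_Ioi strictMonoOn_div_one_add.injOn]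
  exact setIntegral_congr_fun measurableSet_Ioi fun _ _ => by rw [abs_of_nonneg (by positivity)]

lemma integrableOn_Ioo_zero_one_iff (g : ℝ → E) :
    IntegrableOn g (Ioo 0 1) ↔
      IntegrableOn (fun v => ((1 + v) ^ 2)⁻¹ • g (v / (1 + v))) (Ioi 0) := by
  rw [← image_div_one_add_Ioi, integrableOn_image_iff_integrableOn_abs_deriv_smul
    measurableSet_Ioi hasDerivWithinAt_div_one_add_Ioi strictMonoOn_div_one_add.injOn]
  exact integrableOn_congr_fun (fun _ _ => by rw [abs_of_nonneg (by positivity)]) measurableSet_Ioi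

end DivOneAdd

lemma betaIntegrand_div_one_add (s t : ℂ) {v : ℝ} (hv : 0 < v) :
    ((1 + v) ^ 2)⁻¹ •
        (((v / (1 + v) : ℝ) : ℂ) ^ (s - 1) * (1 - ((v / (1 + v) : ℝ) : ℂ)) ^ (t - 1)) =
      (v : ℂ) ^ (s - 1) • (1 + (v : ℂ)) ^ (-(s + t)) := by
  have hp : (0 : ℝ) < 1 + v := by linarith
  have hp' : 1 + (v : ℂ) ≠ 0 := by exact_mod_cast hp.ne'
  have hsub : 1 - ((v / (1 + v) : ℝ) : ℂ) = (((1 + v : ℝ) : ℂ))⁻¹ := by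
    rw [← ofReal_one, ← ofReal_sub, ← ofReal_inv]
    congr 1
    field_simp
    ring
  have hsum : s + t = (s - 1) + (t - 1) + 2 := by ring
  rw [hsub, ofReal_div, div_cpow_ofReal_nonneg hv.le hp.le, inv_cpow_ofReal_nonneg hp.le,
    hsum, cpow_neg, real_smul, smul_eq_mul]
  push_cast
  rw [cpow_add _ _ hp', cpow_add _ _ hp', cpow_ofNat]
  field_simp

theorem betaIntegral_eq_mellin (s t : ℂ) :
    betaIntegral s t = mellin (fun v : ℝ => (1 + (v : ℂ)) ^ (-(s + t))) s := by
  rw [betaIntegral, intervalIntegral.integral_of_le zero_le_one, integral_Ioc_eq_integral_Ioo,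
    integral_Ioo_zero_one_eq_integral_Ioi, mellin]
  exact setIntegral_congr_fun measurableSet_Ioi fun v hv => betaIntegrand_div_one_add s t hv

theorem mellinConvergent_one_add_cpow_neg {s t : ℂ} (hs : 0 < s.re) (ht : 0 < t.re) :
    MellinConvergent (fun v : ℝ => (1 + (v : ℂ)) ^ (-(s + t))) s := by
  have h := betaIntegral_convergent hs ht
  rw [intervalIntegrable_iff_integrableOn_Ioo_of_le zero_le_one,
    integrableOn_Ioo_zero_one_iff] at h
  exact h.congr_fun (fun v hv => betaIntegrand_div_one_add s t hv) measurableSet_Ioi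

theorem hasMellin_one_add_cpow_neg {s r : ℂ} (hs : 0 < s.re) (hrs : 0 < (r - s).re) :
    HasMellin (fun v : ℝ => (1 + (v : ℂ)) ^ (-r)) s (Gamma s * Gamma (r - s) / Gamma r) := by
  have hr : s + (r - s) = r := add_sub_cancel s r
  have h := betaIntegral_eq_Gamma_mul_div _ _ hs hrs
  rw [betaIntegral_eq_mellin, hr] at h
  exact ⟨hr ▸ mellinConvergent_one_add_cpow_neg hs hrs, h⟩

lemma add_cpow_neg_eq_mul {c t : ℝ} (hc : 0 < c) (ht : 0 ≤ t) (r : ℂ) :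
    ((t : ℂ) + c) ^ (-r) = (c : ℂ) ^ (-r) * (1 + ((c⁻¹ * t : ℝ) : ℂ)) ^ (-r) := by
  have hc' : (c : ℂ) ≠ 0 := ofReal_ne_zero.2 hc.ne'
  have h : (t : ℂ) + c = ((c : ℝ) : ℂ) * ((1 + c⁻¹ * t : ℝ) : ℂ) := by
    push_cast
    field_simp
    ring
  rw [h, mul_cpow_ofReal_nonneg hc.le (by positivity)]
  push_cast
  rfl

theorem hasMellin_add_cpow_neg {c : ℝ} (hc : 0 < c) {s r : ℂ} (hs : 0 < s.re)
    (hrs : 0 < (r - s).re) :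
    HasMellin (fun t : ℝ => ((t : ℂ) + c) ^ (-r)) s
      ((c : ℂ) ^ (s - r) * (Gamma s * Gamma (r - s) / Gamma r)) := by
  set f : ℝ → ℂ := fun t => (1 + (t : ℂ)) ^ (-r)
  have hf : HasMellin f s (Gamma s * Gamma (r - s) / Gamma r) := hasMellin_one_add_cpow_neg hs hrs
  set g : ℝ → ℂ := fun t => (c : ℂ) ^ (-r) • f (c⁻¹ * t)
  have hfg : ∀ t ∈ Ioi (0 : ℝ),
      (t : ℂ) ^ (s - 1) • ((t : ℂ) + c) ^ (-r) = (t : ℂ) ^ (s - 1) • g t :=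
    fun t ht => by rw [add_cpow_neg_eq_mul hc (le_of_lt ht)]; rfl
  have hconst : (c : ℂ) ^ (-r) * ((c⁻¹ : ℝ) : ℂ) ^ (-s) = (c : ℂ) ^ (s - r) := by
    have hc' : (c : ℂ) ≠ 0 := ofReal_ne_zero.2 hc.ne'
    rw [ofReal_inv, inv_cpow_ofReal_nonneg hc.le, ← cpow_neg, neg_neg, sub_eq_add_neg,
      cpow_add _ _ hc', mul_comm]
  have hg : MellinConvergent g s :=
    ((MellinConvergent.comp_mul_left (inv_pos.2 hc)).2 hf.1).const_smul _
  refine ⟨hg.congr_fun (fun t ht => (hfg t ht).symm) measurableSet_Ioi, ?_⟩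
  rw [mellin, setIntegral_congr_fun measurableSet_Ioi hfg, ← mellin, mellin_const_smul,
    mellin_comp_mul_left _ _ (inv_pos.2 hc), hf.2, smul_eq_mul, smul_eq_mul, ← mul_assoc, hconst]

lemma norm_cpow_mul_add_cpow_neg {c v : ℝ} (hc : 0 ≤ c) (hv : 0 < v) (s r : ℂ) :
    ((‖(v : ℂ) ^ (s - 1) * ((v : ℂ) + c) ^ (-r)‖ : ℝ) : ℂ) =
      (v : ℂ) ^ ((s.re : ℂ) - 1) * ((v : ℂ) + c) ^ (-(r.re : ℂ)) := by
  have hvc : 0 < v + c := by linarith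
  rw [norm_mul, ← ofReal_add, norm_cpow_eq_rpow_re_of_pos hv, norm_cpow_eq_rpow_re_of_pos hvc,
    ofReal_mul, ofReal_cpow hv.le, ofReal_cpow hvc.le]
  simp

lemma integral_norm_cpow_mul_add_cpow_neg {c : ℝ} (hc : 0 < c) {s r : ℂ} (hs : 0 < s.re)
    (hrs : 0 < (r - s).re) :
    ∫ v in Ioi (0 : ℝ), ‖(v : ℂ) ^ (s - 1) * ((v : ℂ) + c) ^ (-r)‖ =
      c ^ (s.re - r.re) * ‖Gamma s.re * Gamma (r.re - s.re) / Gamma r.re‖ := by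
  have h := (hasMellin_add_cpow_neg hc (s := s.re) (r := r.re) (by simpa using hs)
    (by simpa using hrs)).2
  simp only [mellin, smul_eq_mul] at h
  rw [← setIntegral_congr_fun measurableSet_Ioi
    (fun v hv => norm_cpow_mul_add_cpow_neg hc.le hv s r), integral_complex_ofReal] at h
  have := congrArg norm h
  rw [norm_real, Real.norm_of_nonneg (integral_nonneg fun _ => norm_nonneg _), norm_mul,
    norm_cpow_eq_rpow_re_of_pos hc] at this
  simpa using this

theorem integral_cpow_mul_hurwitzZetaSeries {s r : ℂ} {a : ℝ} (ha : 0 < a) (hs : 0 < s.re)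
    (hrs : 1 < (r - s).re) :
    ∫ v in Ioi (0 : ℝ), (v : ℂ) ^ (s - 1) * hurwitzZetaSeries r ((v : ℂ) + a) =
      Gamma s * Gamma (r - s) / Gamma r * hurwitzZetaSeries (r - s) a := by
  set F : ℕ → ℝ → ℂ := fun k v => (v : ℂ) ^ (s - 1) * ((v : ℂ) + (k + a : ℝ)) ^ (-r)
  have hrs₀ : 0 < (r - s).re := by linarith
  have hka (k : ℕ) : 0 < (k + a : ℝ) := by positivity
  have hF (k : ℕ) := hasMellin_add_cpow_neg (hka k) hs hrs₀
  have hF_sum : Summable fun k => ∫ v in Ioi 0, ‖F k v‖ := by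
    simp only [F, integral_norm_cpow_mul_add_cpow_neg (hka _) hs hrs₀]
    have hp := (Real.summable_one_div_nat_add_rpow a (r.re - s.re)).2 (by simpa using hrs)
    refine Summable.mul_right _ <| hp.congr fun k => ?_
    rw [abs_of_pos (hka k), one_div, ← Real.rpow_neg (hka k).le, neg_sub]
  have hseries (v : ℝ) :
      (v : ℂ) ^ (s - 1) * hurwitzZetaSeries r ((v : ℂ) + a) = ∑' k, F k v := by
    rw [hurwitzZetaSeries, ← tsum_mul_left]
    refine tsum_congr fun k => ?_
    rw [one_div, ← cpow_neg]
    simp only [F]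
    push_cast
    ring_nf
  calc ∫ v in Ioi (0 : ℝ), (v : ℂ) ^ (s - 1) * hurwitzZetaSeries r ((v : ℂ) + a)
      = ∑' k, ∫ v in Ioi (0 : ℝ), F k v := by
        simp only [hseries]
        exact (integral_tsum_of_summable_integral_norm (fun k => (hF k).1) hF_sum).symm
    _ = ∑' k : ℕ, Gamma s * Gamma (r - s) / Gamma r * (1 / ((k : ℂ) + a) ^ (r - s)) := by
        refine tsum_congr fun k => ?_
        have h := (hF k).2
        simp only [mellin, smul_eq_mul] at h
        rw [h, mul_comm, one_div, ← cpow_neg, neg_sub]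
        push_cast
        rfl
    _ = Gamma s * Gamma (r - s) / Gamma r * hurwitzZetaSeries (r - s) a := by
        rw [tsum_mul_left, hurwitzZetaSeries]

theorem mellin_hurwitzZeta_general (s b : ℂ) (w : ℝ) (hs : 0 < s.re) (hw : 0 < w)
    (hbs : 0 < (b - s).re) :
    ∫ v in Ioi (0 : ℝ), (v : ℂ) ^ (s - 1) * hurwitzZetaSeries (b + 1) ((v : ℂ) + w + 1 / 2) =
      Complex.Gamma s * Complex.Gamma (b + 1 - s) *
        hurwitzZetaSeries (b + 1 - s) ((w : ℂ) + 1 / 2) / Complex.Gamma (b + 1) := by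
  have h := integral_cpow_mul_hurwitzZetaSeries (r := b + 1) (a := w + 1 / 2) (by positivity) hs
    (by rw [add_sub_right_comm, add_re, one_re]; linarith)
  push_cast at h
  simp only [add_assoc] at h ⊢
  rw [h]
  ring

theorem mellin_hurwitzZeta (s b : ℂ) (w : ℝ) (hs : 0 < s.re) (hw : 0 < w)
    (hb : 0 < b.re) (hbs : 0 < (b - s).re) :
    ∫ v in Ioi (0 : ℝ), (v : ℂ) ^ (s - 1) * hurwitzZetaSeries (b + 1) ((v : ℂ) + w + 1 / 2) =
      Complex.Gamma s * Complex.Gamma (b + 1 - s) *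
        hurwitzZetaSeries (b + 1 - s) ((w : ℂ) + 1 / 2) / Complex.Gamma (b + 1) :=
  mellin_hurwitzZeta_general s b w hs hw hbs
end

section
/- For real v > 0, the limit as b → 0 of (ζ(b+1, v) − 1/b) equals −ψ(v), where ψ is the digamma function. -/
open Complex Filter

/-- The classical Hurwitz zeta function `ζ(s,a)` for real `a > 0`, defined (by analytic
continuation in `s`) from Mathlib's periodic Hurwitz zeta function on `[0,1)` by removing
the finitely many initial terms. -/
noncomputable def hzeta (s : ℂ) (a : ℝ) : ℂ :=
  HurwitzZeta.hurwitzZeta (↑(Int.fract a) : UnitAddCircle) s -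
    ∑ m ∈ Finset.range ⌊a⌋₊, ((m : ℂ) + (Int.fract a : ℝ)) ^ (-s)

/-- The digamma function `ψ(z) = Γ'(z)/Γ(z)`. -/
noncomputable def digamma (z : ℂ) : ℂ := deriv Complex.Gamma z / Complex.Gamma z

/-!
For `Re s > 1`, `ζ(s,v) - ζ(s) = ∑ₙ ((n+v)^{-s} - (n+1)^{-s})`, and the left side is holomorphic
at `s = 1`. Letting `s → 1⁺` along the reals, the mean value theorem bounds the terms by `O(n⁻²)`
uniformly, so by dominated convergence `ζ(1,v) - ζ(1) = ∑ₙ (1/(n+v) - 1/(n+1))`. This series is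
`-γ - ψ(v)`: its partial sums are `ψ(v+n) - ψ(v) - H_n`, and the log-convexity of `Γ` squeezes
`ψ(x)` between `log (x-1)` and `log x`, while `H_n - log n → γ`. Adding `ζ(s) - 1/(s-1) → γ`
gives the claim.
-/

open Set Topology

local notation "γ" => Real.eulerMascheroniConstant

namespace Real

lemma abs_rpow_neg_sub_rpow_neg_le {s m x y : ℝ} (hs : 0 ≤ s) (hm : 0 < m) (hx : m ≤ x)
    (hy : m ≤ y) : |x ^ (-s) - y ^ (-s)| ≤ s * m ^ (-s - 1) * |x - y| := by
  have hderiv (t : ℝ) (ht : t ∈ Ici m) :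
      HasDerivWithinAt (fun t : ℝ ↦ t ^ (-s)) (-s * t ^ (-s - 1)) (Ici m) t :=
    (hasDerivAt_rpow_const (Or.inl (hm.trans_le ht).ne')).hasDerivWithinAt
  have hbound (t : ℝ) (ht : t ∈ Ici m) : ‖-s * t ^ (-s - 1)‖ ≤ s * m ^ (-s - 1) := by
    have ht0 : 0 < t := hm.trans_le ht
    rw [norm_mul, norm_neg, norm_of_nonneg hs, norm_of_nonneg (rpow_nonneg ht0.le _)]
    exact mul_le_mul_of_nonneg_left
      (rpow_le_rpow_of_nonpos hm ht (by linarith)) hs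
  simpa only [norm_eq_abs] using
    (convex_Ici m).norm_image_sub_le_of_norm_hasDerivWithin_le hderiv hbound hy hx

lemma rpow_neg_sub_one_le {s m : ℝ} (hm : 0 < m) (hs1 : 1 ≤ s) (hs2 : s ≤ 2) :
    m ^ (-s - 1) ≤ m ^ (-2 : ℝ) + m ^ (-3 : ℝ) := by
  rcases le_total 1 m with h | h
  · have := rpow_le_rpow_of_exponent_le h (by linarith : -s - 1 ≤ -2)
    linarith [rpow_nonneg hm.le (-3 : ℝ)]
  · have := rpow_le_rpow_of_exponent_ge hm h (by linarith : -3 ≤ -s - 1)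
    linarith [rpow_nonneg hm.le (-2 : ℝ)]

lemma summable_nat_add_rpow_neg {a p : ℝ} (ha : 0 < a) (hp : 1 < p) :
    Summable (fun n : ℕ ↦ ((n : ℝ) + a) ^ (-p)) := by
  refine ((summable_one_div_nat_add_rpow a p).mpr hp).congr fun n ↦ ?_
  rw [abs_of_pos (by positivity), rpow_neg (by positivity), one_div]

lemma abs_nat_add_rpow_neg_sub_le {v s : ℝ} (hv : 0 < v) (hs1 : 1 ≤ s) (hs2 : s ≤ 2) (n : ℕ) :
    |((n : ℝ) + v) ^ (-s) - ((n : ℝ) + 1) ^ (-s)| ≤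
      2 * |v - 1| * (((n : ℝ) + min v 1) ^ (-2 : ℝ) + ((n : ℝ) + min v 1) ^ (-3 : ℝ)) := by
  have hm : 0 < (n : ℝ) + min v 1 := by positivity
  calc |((n : ℝ) + v) ^ (-s) - ((n : ℝ) + 1) ^ (-s)|
      ≤ s * ((n : ℝ) + min v 1) ^ (-s - 1) * |(n + v) - (n + 1)| :=
        abs_rpow_neg_sub_rpow_neg_le (by linarith) hm (by simp) (by simp)
    _ ≤ 2 * (((n : ℝ) + min v 1) ^ (-2 : ℝ) + ((n : ℝ) + min v 1) ^ (-3 : ℝ)) * |v - 1| := by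
        rw [add_sub_add_left_eq_sub]
        gcongr
        exact rpow_neg_sub_one_le hm hs1 hs2
    _ = _ := by ring

lemma differentiableAt_log_Gamma {x : ℝ} (hx : 0 < x) : DifferentiableAt ℝ (log ∘ Gamma) x :=
  (differentiableAt_Gamma fun m ↦ ne_of_gt (by linarith [m.cast_nonneg (α := ℝ)])).log
    (Gamma_pos_of_pos hx).ne'

lemma log_Gamma_add_one {x : ℝ} (hx : 0 < x) :
    (log ∘ Gamma) (x + 1) = (log ∘ Gamma) x + log x := by
  simp only [Function.comp_apply, Gamma_add_one hx.ne', log_mul hx.ne' (Gamma_pos_of_pos hx).ne',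
    add_comm]

lemma deriv_log_Gamma_add_one {x : ℝ} (hx : 0 < x) :
    deriv (log ∘ Gamma) (x + 1) = deriv (log ∘ Gamma) x + x⁻¹ := by
  rw [← deriv_comp_add_const, ← deriv_log,
    ← deriv_add (differentiableAt_log_Gamma hx) (differentiableAt_log hx.ne')]
  exact EventuallyEq.deriv_eq ((eventually_gt_nhds hx).mono fun y hy ↦ log_Gamma_add_one hy)

lemma deriv_log_Gamma_add_nat {x : ℝ} (hx : 0 < x) (n : ℕ) :
    deriv (log ∘ Gamma) (x + n) = deriv (log ∘ Gamma) x + ∑ k ∈ Finset.range n, (x + k)⁻¹ := by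
  induction n with
  | zero => simp
  | succ n ih =>
    rw [Nat.cast_succ, ← add_assoc, deriv_log_Gamma_add_one (by positivity), ih,
      Finset.sum_range_succ, add_assoc]

lemma deriv_log_Gamma_le_log {x : ℝ} (hx : 0 < x) : deriv (log ∘ Gamma) x ≤ log x := by
  refine (convexOn_log_Gamma.deriv_le_slope hx (by linarith : (0 : ℝ) < x + 1) (lt_add_one x)
    (differentiableAt_log_Gamma hx)).trans_eq ?_
  rw [slope_def_field, log_Gamma_add_one hx]
  ring

lemma log_sub_one_le_deriv_log_Gamma {x : ℝ} (hx : 1 < x) :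
    log (x - 1) ≤ deriv (log ∘ Gamma) x := by
  have hx' : 0 < x - 1 := sub_pos.mpr hx
  have hrec := log_Gamma_add_one hx'
  rw [sub_add_cancel] at hrec
  refine le_of_eq_of_le ?_ (convexOn_log_Gamma.slope_le_deriv hx' (by linarith : (0 : ℝ) < x)
    (sub_one_lt x) (differentiableAt_log_Gamma (by linarith)))
  rw [slope_def_field, hrec]
  ring

lemma tendsto_deriv_log_Gamma_add_nat_sub_log {x : ℝ} (hx : 0 < x) :
    Tendsto (fun n : ℕ ↦ deriv (log ∘ Gamma) (x + n) - log n) atTop (𝓝 0) := by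
  have hlog (c : ℝ) : Tendsto (fun n : ℕ ↦ log (n + c) - log n) atTop (𝓝 0) :=
    (tendsto_log_comp_add_sub_log c).comp tendsto_natCast_atTop_atTop
  refine tendsto_of_tendsto_of_tendsto_of_le_of_le' (hlog (x - 1)) (hlog x) ?_ ?_
  · filter_upwards [eventually_ge_atTop 1] with n hn
    have h1 : (1 : ℝ) ≤ n := by exact_mod_cast hn
    have := log_sub_one_le_deriv_log_Gamma (by linarith : 1 < x + n)
    rw [show x + n - 1 = n + (x - 1) by ring] at this
    linarith
  · filter_upwards with n
    have := deriv_log_Gamma_le_log (by positivity : 0 < x + n)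
    rw [add_comm x n] at this ⊢
    linarith

theorem hasSum_nat_add_inv_sub_inv_add_one {x : ℝ} (hx : 0 < x) :
    HasSum (fun n : ℕ ↦ ((n : ℝ) + x)⁻¹ - ((n : ℝ) + 1)⁻¹) (-(γ + deriv (log ∘ Gamma) x)) := by
  have hsum : Summable (fun n : ℕ ↦ ((n : ℝ) + x)⁻¹ - ((n : ℝ) + 1)⁻¹) := by
    have hμ : 0 < min x 1 := lt_min hx one_pos
    have hbound := ((summable_nat_add_rpow_neg hμ one_lt_two).add
      (summable_nat_add_rpow_neg (p := 3) hμ (by norm_num))).mul_left (2 * |x - 1|)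
    refine hbound.of_norm_bounded fun n ↦ ?_
    simpa only [neg_one_mul, rpow_neg_one, norm_eq_abs] using
      abs_nat_add_rpow_neg_sub_le hx le_rfl one_le_two n
  refine hsum.hasSum_iff_tendsto_nat.mpr ?_
  have hpartial (n : ℕ) : ∑ k ∈ Finset.range n, (((k : ℝ) + x)⁻¹ - ((k : ℝ) + 1)⁻¹) =
      (deriv (log ∘ Gamma) (x + n) - log n) - (harmonic n - log n) - deriv (log ∘ Gamma) x := by
    rw [Finset.sum_sub_distrib, deriv_log_Gamma_add_nat hx, harmonic]
    push_cast
    simp only [add_comm x]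
    ring
  simp only [hpartial]
  convert ((tendsto_deriv_log_Gamma_add_nat_sub_log hx).sub tendsto_harmonic_sub_log).sub_const
    (deriv (log ∘ Gamma) x) using 2
  ring

end Real

lemma deriv_eq_ofReal_deriv {f : ℂ → ℂ} {g : ℝ → ℝ} {x : ℝ}
    (hf : DifferentiableAt ℂ f x) (hg : DifferentiableAt ℝ g x) (hfg : ∀ t : ℝ, f t = g t) :
    deriv f x = deriv g x := by
  have hf' := hf.hasDerivAt.comp_ofReal
  simp only [hfg] at hf'
  exact hf'.unique hg.hasDerivAt.ofReal_comp

lemma digamma_ofReal {x : ℝ} (hx : 0 < x) :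
    _root_.digamma x = ((deriv (Real.log ∘ Real.Gamma) x : ℝ) : ℂ) := by
  have hne (m : ℕ) : x ≠ -m := ne_of_gt (by linarith [m.cast_nonneg (α := ℝ)])
  have hC : DifferentiableAt ℂ Complex.Gamma x :=
    Complex.differentiableAt_Gamma _ fun m ↦ by exact_mod_cast hne m
  have hR : DifferentiableAt ℝ Real.Gamma x := Real.differentiableAt_Gamma hne
  rw [_root_.digamma, deriv_eq_ofReal_deriv hC hR Complex.Gamma_ofReal,
    Complex.Gamma_ofReal, Function.comp_def, deriv.log hR (Real.Gamma_pos_of_pos hx).ne',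
    ofReal_div]

lemma hasSum_hzeta {v : ℝ} (hv : 0 < v) {s : ℂ} (hs : 1 < s.re) :
    HasSum (fun n : ℕ ↦ 1 / ((n : ℂ) + v) ^ s) (hzeta s v) := by
  have hfract : Int.fract v ∈ Icc (0 : ℝ) 1 := ⟨Int.fract_nonneg v, (Int.fract_lt_one v).le⟩
  have hshift (n : ℕ) : ((n + ⌊v⌋₊ : ℕ) : ℂ) + (Int.fract v : ℝ) = n + v := by
    have hv' : (⌊v⌋₊ : ℝ) + Int.fract v = v := by
      rw [natCast_floor_eq_intCast_floor hv.le, Int.floor_add_fract]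
    conv_rhs => rw [← hv']
    push_cast
    ring
  have hsum := (hasSum_nat_add_iff' ⌊v⌋₊).mpr
    (HurwitzZeta.hasSum_hurwitzZeta_of_one_lt_re hfract hs)
  simp only [hshift] at hsum
  rwa [hzeta, Finset.sum_congr rfl fun m _ ↦ by rw [cpow_neg, ← one_div]]

lemma differentiableAt_hzeta_sub_riemannZeta (v : ℝ) {s : ℂ} (hs : s ≠ 0) :
    DifferentiableAt ℂ (fun s ↦ hzeta s v - riemannZeta s) s := by
  have hdiff :=
    HurwitzZeta.differentiable_hurwitzZeta_sub_hurwitzZeta ((Int.fract v : ℝ) : UnitAddCircle) 0 s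
  rw [HurwitzZeta.hurwitzZeta_zero] at hdiff
  have hsum : DifferentiableAt ℂ
      (fun s ↦ ∑ m ∈ Finset.range ⌊v⌋₊, ((m : ℂ) + (Int.fract v : ℝ)) ^ (-s)) s :=
    DifferentiableAt.fun_sum fun m _ ↦ differentiableAt_neg_iff.mpr differentiableAt_id
      |>.const_cpow (Or.inr (neg_ne_zero.mpr hs))
  simpa only [hzeta, sub_right_comm] using hdiff.fun_sub hsum

lemma hzeta_sub_riemannZeta_ofReal {v : ℝ} (hv : 0 < v) {s : ℝ} (hs : 1 < s) :
    hzeta s v - riemannZeta s =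
      ((∑' n : ℕ, (((n : ℝ) + v) ^ (-s) - ((n : ℝ) + 1) ^ (-s)) : ℝ) : ℂ) := by
  have hs' : 1 < (s : ℂ).re := by simpa using hs
  have hζ : HasSum (fun n : ℕ ↦ 1 / ((n : ℂ) + (1 : ℝ)) ^ (s : ℂ)) (riemannZeta s) := by
    simpa only [AddCircle.coe_period, HurwitzZeta.hurwitzZeta_zero] using
      HurwitzZeta.hasSum_hurwitzZeta_of_one_lt_re (a := 1) (by simp) hs'
  have hterm {a : ℝ} (ha : 0 < a) (n : ℕ) :
      1 / ((n : ℂ) + a) ^ (s : ℂ) = (((n : ℝ) + a) ^ (-s) : ℝ) := by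
    rw [ofReal_cpow (by positivity), ofReal_neg, cpow_neg, one_div]
    push_cast
    rfl
  have hsum := (hasSum_hzeta hv hs').sub hζ
  simp only [hterm hv, hterm one_pos, ← ofReal_sub] at hsum
  rw [← hsum.tsum_eq, ofReal_tsum]

lemma tendsto_tsum_nat_add_rpow_neg_sub {v : ℝ} (hv : 0 < v) :
    Tendsto (fun s : ℝ ↦ ∑' n : ℕ, (((n : ℝ) + v) ^ (-s) - ((n : ℝ) + 1) ^ (-s))) (𝓝[>] 1)
      (𝓝 (-(γ + deriv (Real.log ∘ Real.Gamma) v))) := by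
  rw [← (Real.hasSum_nat_add_inv_sub_inv_add_one hv).tsum_eq]
  have hpow {x : ℝ} (hx : 0 < x) : Tendsto (fun s : ℝ ↦ x ^ (-s)) (𝓝[>] 1) (𝓝 x⁻¹) := by
    have : ContinuousAt (fun s : ℝ ↦ x ^ (-s)) 1 :=
      (Real.continuousAt_const_rpow hx.ne').comp continuousAt_neg
    simpa [Real.rpow_neg_one] using this.tendsto.mono_left nhdsWithin_le_nhds
  have hμ : 0 < min v 1 := lt_min hv one_pos
  refine tendsto_tsum_of_dominated_convergence
    (((Real.summable_nat_add_rpow_neg hμ one_lt_two).add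
      (Real.summable_nat_add_rpow_neg (p := 3) hμ (by norm_num))).mul_left (2 * |v - 1|))
    (fun n ↦ (hpow (by positivity)).sub (hpow (by positivity))) ?_
  filter_upwards [Ioc_mem_nhdsGT one_lt_two] with s hs n
  exact Real.abs_nat_add_rpow_neg_sub_le hv hs.1.le hs.2 n

-- Both terms are junk values at the pole; their difference is the value at `1` of the
-- holomorphic function `s ↦ ζ(s,v) - ζ(s)`.
lemma hzeta_one_sub_riemannZeta_one {v : ℝ} (hv : 0 < v) :
    hzeta 1 v - riemannZeta 1 = ((-(γ + deriv (Real.log ∘ Real.Gamma) v) : ℝ) : ℂ) := by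
  have hcont : Tendsto (fun s : ℝ ↦ hzeta s v - riemannZeta s) (𝓝[>] 1)
      (𝓝 (hzeta 1 v - riemannZeta 1)) := by
    have := (differentiableAt_hzeta_sub_riemannZeta v one_ne_zero).continuousAt.tendsto.comp
      (continuous_ofReal.tendsto (1 : ℝ))
    simpa [Function.comp_def] using this.mono_left nhdsWithin_le_nhds
  refine tendsto_nhds_unique hcont ?_
  refine ((continuous_ofReal.tendsto _).comp (tendsto_tsum_nat_add_rpow_neg_sub hv)).congr' ?_
  filter_upwards [self_mem_nhdsWithin] with s hs
  exact (hzeta_sub_riemannZeta_ofReal hv hs).symm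

theorem hurwitzZeta_sub_pole_tendsto (v : ℝ) (hv : 0 < v) :
    Tendsto (fun b : ℂ => hzeta (b + 1) v - 1 / b) (nhdsWithin 0 {0}ᶜ)
      (nhds (-_root_.digamma v)) := by
  have hshift : Tendsto (fun b : ℂ ↦ b + 1) (𝓝[≠] 0) (𝓝[≠] 1) := by
    simpa using (tendsto_map : Tendsto (· + (1 : ℂ)) (𝓝[≠] 0) _)
  have hdiff : Tendsto (fun b : ℂ ↦ hzeta (b + 1) v - riemannZeta (b + 1)) (𝓝[≠] 0)
      (𝓝 (hzeta 1 v - riemannZeta 1)) :=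
    (differentiableAt_hzeta_sub_riemannZeta v one_ne_zero).continuousAt.tendsto.comp
      (hshift.mono_right nhdsWithin_le_nhds)
  have hζ := tendsto_riemannZeta_sub_one_div.comp hshift
  convert hdiff.add hζ using 2 with b
  · simp only [Function.comp_apply, add_sub_cancel_right]
    ring
  · rw [hzeta_one_sub_riemannZeta_one hv, digamma_ofReal hv]
    push_cast
    ring
end

section
/- For a > 0, b ≥ 0, and complex s with Re(s) > 0, ∫₀^∞ e^{−at} cos(bt) t^{s−1} dt = Γ(s) · cos(s·arctan(b/a)) / (a² + b²)^{s/2}. -/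
/-!
Write `c = a + b i`, so that `e^{-at} cos(bt) = (e^{-ct} + e^{-c̄t}) / 2`. For `Re c > 0` the
Laplace transform `∫₀^∞ t^{s-1} e^{-ct} dt` equals `Γ(s) / c^s`: both sides are holomorphic in `c`
on the right half-plane and agree for real `c` by the substitution `u = ct`, so they agree
everywhere by the identity theorem. Finally `c^{-s} + c̄^{-s} = 2 cos(s arg c) / |c|^s`, and
`arg c = arctan(b / a)` since `a > 0`.
-/

open Complex MeasureTheory Set Filter Topology ComplexConjugate

lemma cpow_eq_normSq_cpow_mul_cexp_arg {c : ℂ} (hc : c ≠ 0) (s : ℂ) :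
    c ^ s = (normSq c : ℂ) ^ (s / 2) * cexp (s * arg c * I) := by
  have hnormSq : (normSq c : ℂ) ≠ 0 := by exact_mod_cast (normSq_pos.mpr hc).ne'
  rw [cpow_def_of_ne_zero hc, cpow_def_of_ne_zero hnormSq, ← exp_add,
    ← ofReal_log (normSq_nonneg c), normSq_eq_norm_sq, Real.log_pow, log]
  push_cast
  ring_nf

lemma arg_conj_of_re_pos {c : ℂ} (hc : 0 < c.re) : arg (conj c) = -arg c := by
  rw [arg_conj, if_neg (slitPlane_arg_ne_pi (mem_slitPlane_iff.mpr (.inl hc)))]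

lemma inv_cpow_add_inv_conj_cpow {c : ℂ} (hc : 0 < c.re) (s : ℂ) :
    (c ^ s)⁻¹ + (conj c ^ s)⁻¹ = 2 * cos (s * arg c) / (normSq c : ℂ) ^ (s / 2) := by
  have hc₀ : c ≠ 0 := by rintro rfl; simp at hc
  rw [cpow_eq_normSq_cpow_mul_cexp_arg hc₀,
    cpow_eq_normSq_cpow_mul_cexp_arg (c := conj c) (by simpa using hc₀), arg_conj_of_re_pos hc,
    normSq_conj, two_cos, mul_inv, mul_inv, ← exp_neg, ← exp_neg]
  push_cast
  ring_nf

lemma arg_eq_arctan_of_re_pos {c : ℂ} (hc : 0 < c.re) : arg c = Real.arctan (c.im / c.re) := by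
  rw [← tan_arg, Real.arctan_tan (neg_pi_div_two_lt_arg_iff.mpr (.inl hc))
    (arg_lt_pi_div_two_iff.mpr (.inl hc))]

lemma cexp_neg_re_mul_mul_cos_im_mul (c z : ℂ) :
    cexp (-(c.re * z)) * cos (c.im * z) = (cexp (-(c * z)) + cexp (-(conj c * z))) / 2 := by
  rw [cos, mul_div_assoc', mul_add, ← exp_add, ← exp_add]
  conv_rhs => rw [← re_add_im c]
  simp only [map_add, map_mul, conj_ofReal, conj_I]
  ring_nf

lemma DifferentiableOn.eqOn_of_eventually_eq_ofReal {U : Set ℂ} {f g : ℂ → ℂ}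
    (hf : DifferentiableOn ℂ f U) (hg : DifferentiableOn ℂ g U) (hU : IsOpen U)
    (hUc : IsPreconnected U) {x : ℝ} (hx : (x : ℂ) ∈ U) (hfg : ∀ᶠ y : ℝ in 𝓝 x, f y = g y) :
    EqOn f g U := by
  refine (hf.analyticOnNhd hU).eqOn_of_preconnected_of_frequently_eq (hg.analyticOnNhd hU) hUc hx ?_
  have hofReal : Tendsto ((↑) : ℝ → ℂ) (𝓝[≠] x) (𝓝[≠] (x : ℂ)) :=
    continuous_ofReal.continuousWithinAt.tendsto_nhdsWithin fun _ _ ↦ by simp_all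
  exact hofReal.frequently (hfg.filter_mono nhdsWithin_le_nhds).frequently

section LaplaceTransform

variable {s c : ℂ}

lemma norm_ofReal_cpow_mul_cexp_neg_mul {t : ℝ} (ht : 0 < t) :
    ‖(t : ℂ) ^ s * cexp (-(c * t))‖ = t ^ s.re * Real.exp (-(c.re * t)) := by
  rw [norm_mul, Complex.norm_exp, norm_cpow_eq_rpow_re_of_pos ht]
  simp

lemma integrableOn_ofReal_cpow_mul_cexp_neg_mul (hs : 0 < s.re) (hc : 0 < c.re) :
    IntegrableOn (fun t : ℝ ↦ (t : ℂ) ^ (s - 1) * cexp (-(c * t))) (Ioi 0) := by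
  have hbound : IntegrableOn (fun t : ℝ ↦ t ^ (s.re - 1) * Real.exp (-(c.re * t))) (Ioi 0) := by
    simpa using integrableOn_rpow_mul_exp_neg_mul_rpow (by linarith) zero_lt_one hc
  refine hbound.mono' (by fun_prop) ?_
  filter_upwards [ae_restrict_mem measurableSet_Ioi] with t ht
  rw [norm_ofReal_cpow_mul_cexp_neg_mul ht, sub_re, one_re]

lemma hasDerivAt_ofReal_cpow_mul_cexp_neg_mul {t : ℝ} (ht : 0 < t) :
    HasDerivAt (fun c ↦ (t : ℂ) ^ (s - 1) * cexp (-(c * t)))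
      (-((t : ℂ) ^ s * cexp (-(c * t)))) c := by
  have ht' : (t : ℂ) ≠ 0 := ofReal_ne_zero.mpr ht.ne'
  refine (((hasDerivAt_mul_const (t : ℂ)).fun_neg.cexp).const_mul _).congr_deriv ?_
  rw [cpow_sub _ _ ht', cpow_one]
  field_simp

lemma differentiableOn_integral_ofReal_cpow_mul_cexp_neg_mul (hs : 0 < s.re) :
    DifferentiableOn ℂ (fun c ↦ ∫ t in Ioi (0 : ℝ), (t : ℂ) ^ (s - 1) * cexp (-(c * t)))
      {c | 0 < c.re} := by
  intro c₀ hc₀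
  set ε := c₀.re / 2
  have hε : 0 < ε := half_pos hc₀
  have hnhds : {c : ℂ | ε < c.re} ∈ 𝓝 c₀ :=
    (isOpen_lt continuous_const continuous_re).mem_nhds (show ε < c₀.re from half_lt_self hc₀)
  have hbound : IntegrableOn (fun t : ℝ ↦ t ^ s.re * Real.exp (-(ε * t))) (Ioi 0) := by
    simpa using integrableOn_rpow_mul_exp_neg_mul_rpow (by linarith) zero_lt_one hε
  refine (hasDerivAt_integral_of_dominated_loc_of_deriv_le
    (F := fun c (t : ℝ) ↦ (t : ℂ) ^ (s - 1) * cexp (-(c * t)))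
    (F' := fun c (t : ℝ) ↦ -((t : ℂ) ^ s * cexp (-(c * t)))) hnhds
    (.of_forall fun c ↦ by fun_prop) (integrableOn_ofReal_cpow_mul_cexp_neg_mul hs hc₀)
    (by fun_prop) ?_ hbound ?_).2
    |>.differentiableAt.differentiableWithinAt
  · filter_upwards [ae_restrict_mem measurableSet_Ioi] with t (ht : 0 < t) c (hc : ε < c.re)
    rw [norm_neg, norm_ofReal_cpow_mul_cexp_neg_mul ht]
    gcongr
  · filter_upwards [ae_restrict_mem measurableSet_Ioi] with t (ht : 0 < t) c _
    exact hasDerivAt_ofReal_cpow_mul_cexp_neg_mul ht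

theorem integral_ofReal_cpow_mul_cexp_neg_mul (hs : 0 < s.re) (hc : 0 < c.re) :
    ∫ t in Ioi (0 : ℝ), (t : ℂ) ^ (s - 1) * cexp (-(c * t)) = Gamma s / c ^ s := by
  have hU : IsOpen {c : ℂ | 0 < c.re} := isOpen_lt continuous_const continuous_re
  have hGamma : DifferentiableOn ℂ (fun c : ℂ ↦ Gamma s / c ^ s) {c | 0 < c.re} :=
    fun c (hc : 0 < c.re) ↦
      ((differentiableAt_const _).div (differentiableAt_id.cpow_const (.inl hc))
        (by rw [Ne, cpow_eq_zero_iff]; rintro ⟨rfl, -⟩; simp at hc)).differentiableWithinAt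
  refine (differentiableOn_integral_ofReal_cpow_mul_cexp_neg_mul hs).eqOn_of_eventually_eq_ofReal
    hGamma hU (convex_halfSpace_re_gt 0).isPreconnected (x := 1) (by simp) ?_ hc
  filter_upwards [lt_mem_nhds one_pos] with r (hr : 0 < r)
  have harg : arg (r : ℂ) ≠ Real.pi := by
    rw [arg_ofReal_of_nonneg hr.le]
    exact Real.pi_pos.ne
  rw [integral_cpow_mul_exp_neg_mul_Ioi hs hr, one_div, inv_cpow _ _ harg, div_eq_inv_mul]

theorem integral_cexp_neg_re_mul_mul_cos_im_mul_cpow (hs : 0 < s.re) (hc : 0 < c.re) :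
    ∫ t in Ioi (0 : ℝ), cexp (-((c.re : ℂ) * t)) * cos ((c.im : ℂ) * t) * (t : ℂ) ^ (s - 1) =
      Gamma s * cos (s * arg c) / (normSq c : ℂ) ^ (s / 2) := by
  have hc' : 0 < (conj c).re := by rwa [conj_re]
  calc _ = (∫ t in Ioi (0 : ℝ), (t : ℂ) ^ (s - 1) * cexp (-(c * t)) +
          (t : ℂ) ^ (s - 1) * cexp (-(conj c * t))) / 2 := by
        rw [← integral_div]
        refine setIntegral_congr_fun measurableSet_Ioi fun t _ ↦ ?_
        rw [cexp_neg_re_mul_mul_cos_im_mul]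
        ring
    _ = Gamma s * ((c ^ s)⁻¹ + (conj c ^ s)⁻¹) / 2 := by
        rw [integral_add (integrableOn_ofReal_cpow_mul_cexp_neg_mul hs hc)
          (integrableOn_ofReal_cpow_mul_cexp_neg_mul hs hc'),
          integral_ofReal_cpow_mul_cexp_neg_mul hs hc, integral_ofReal_cpow_mul_cexp_neg_mul hs hc']
        ring
    _ = _ := by
        rw [inv_cpow_add_inv_conj_cpow hc]
        ring

end LaplaceTransform

theorem euler_integral_general (a b : ℝ) (s : ℂ) (ha : 0 < a) (hs : 0 < s.re) :
    ∫ t in Ioi (0 : ℝ), Complex.exp (-((a : ℂ) * t)) * Complex.cos ((b : ℂ) * t) *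
        (t : ℂ) ^ (s - 1) =
      Complex.Gamma s * Complex.cos (s * (Real.arctan (b / a) : ℂ)) /
        ((a ^ 2 + b ^ 2 : ℝ) : ℂ) ^ (s / 2) := by
  have hc : 0 < (⟨a, b⟩ : ℂ).re := ha
  have harg : arg ⟨a, b⟩ = Real.arctan (b / a) := arg_eq_arctan_of_re_pos hc
  have hnormSq : normSq ⟨a, b⟩ = a ^ 2 + b ^ 2 := by rw [normSq_mk, sq, sq]
  simpa only [harg, hnormSq] using integral_cexp_neg_re_mul_mul_cos_im_mul_cpow hs hc

theorem euler_integral (a b : ℝ) (s : ℂ) (ha : 0 < a) (hb : 0 ≤ b) (hs : 0 < s.re) :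
    ∫ t in Ioi (0 : ℝ), Complex.exp (-((a : ℂ) * t)) * Complex.cos ((b : ℂ) * t) *
        (t : ℂ) ^ (s - 1) =
      Complex.Gamma s * Complex.cos (s * (Real.arctan (b / a) : ℂ)) /
        ((a ^ 2 + b ^ 2 : ℝ) : ℂ) ^ (s / 2) :=
  euler_integral_general a b s ha hs
end
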